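/- The function g : ℕ → ℝ defined by g(k) = (F(k) + F(k+1))/2 is discretely convex: for every k ≥ 1, 2·g(k) ≤ g(k−1) + g(k+1). -/

import Mathlib

/-- `F(m) = C(m, ⌊m/2⌋) · 2^{−m}`. -/
noncomputable def F' (m : ℕ) : ℝ := (m.choose (m / 2) : ℝ) / 2 ^ m

/-!
Since `C(2n+2, n+1) = 2 C(2n+1, n)`, `F` takes equal values at `2n+1` and `2n+2`, so the second
difference of `g` at `k` is half of `F(k-1) - F(k) - F(k+1) + F(k+2)`: it vanishes for even `k`
and for odd `k = 2n+1` it is the second difference of the even subsequence `a n = F(2n)`.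
The ratio `a (n+1) / a n = (2n+1)/(2n+2)` makes the decrements `a n - a (n+1) = a n / (2n+2)`
decreasing, i.e. `a` is convex.
-/

open Nat

lemma choose_two_mul_add_two_eq_two_mul_choose (n : ℕ) :
    (2 * n + 2).choose (n + 1) = 2 * (2 * n + 1).choose n := by
  rw [Nat.choose_succ_succ, Nat.choose_symm_half, ← two_mul]

lemma F'_nonneg (m : ℕ) : 0 ≤ F' m := by
  unfold F'; positivity

lemma F'_two_mul_add_one (n : ℕ) : F' (2 * n + 1) = F' (2 * n + 2) := by
  have hhalf₁ : (2 * n + 1) / 2 = n := by omega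
  have hhalf₂ : (2 * n + 2) / 2 = n + 1 := by omega
  rw [F', F', hhalf₁, hhalf₂, choose_two_mul_add_two_eq_two_mul_choose, pow_succ _ (2 * n + 1)]
  push_cast
  ring

lemma F'_two_mul (n : ℕ) : F' (2 * n) = (centralBinom n : ℝ) / 2 ^ (2 * n) := by
  rw [F', centralBinom_eq_two_mul_choose, Nat.mul_div_cancel_left n two_pos]

lemma F'_two_mul_add_two_mul (n : ℕ) :
    (2 * n + 2) * F' (2 * n + 2) = (2 * n + 1) * F' (2 * n) := by
  have hrec : ((n : ℝ) + 1) * centralBinom (n + 1) = 2 * (2 * n + 1) * centralBinom n := by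
    exact_mod_cast succ_mul_centralBinom_succ n
  rw [show 2 * n + 2 = 2 * (n + 1) by ring, F'_two_mul, F'_two_mul]
  field_simp
  rw [show 2 * (n + 1) = 2 * n + 2 by ring, pow_add]
  linear_combination 2 * (2 : ℝ) ^ (2 * n) * hrec

lemma F'_two_mul_sub_F'_two_mul_add_two (n : ℕ) :
    F' (2 * n) - F' (2 * n + 2) = F' (2 * n) / (2 * n + 2) := by
  have hrec := F'_two_mul_add_two_mul n
  field_simp
  linarith

lemma F'_two_mul_add_two_sub_le (n : ℕ) :
    F' (2 * n + 2) - F' (2 * n + 4) ≤ F' (2 * n) - F' (2 * n + 2) := by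
  have hstep₀ := F'_two_mul_sub_F'_two_mul_add_two n
  have hstep₁ := F'_two_mul_sub_F'_two_mul_add_two (n + 1)
  rw [show 2 * (n + 1) = 2 * n + 2 by ring, show 2 * n + 2 + 2 = 2 * n + 4 by ring] at hstep₁
  have hmono : F' (2 * n + 2) ≤ F' (2 * n) := by
    have := div_nonneg (F'_nonneg (2 * n)) (by positivity : (0 : ℝ) ≤ 2 * n + 2)
    linarith
  rw [hstep₀, hstep₁]
  gcongr <;> linarith [F'_nonneg (2 * n + 2)]

/-- The function `g(k) = (F(k) + F(k+1))/2` is discretely convex: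
`2 g(k) ≤ g(k−1) + g(k+1)` for all `k ≥ 1`. -/
theorem g_discretely_convex
    (g : ℕ → ℝ) (hg : ∀ k, g k = (F' k + F' (k + 1)) / 2) :
    ∀ k, 1 ≤ k → 2 * g k ≤ g (k - 1) + g (k + 1) := by
  intro k hk
  obtain ⟨j, rfl⟩ := Nat.exists_eq_add_of_le' hk
  simp only [hg, Nat.add_sub_cancel]
  obtain ⟨n, rfl | rfl⟩ := Nat.even_or_odd' j
  · have hodd₀ := F'_two_mul_add_one n
    have hodd₁ := F'_two_mul_add_one (n + 1)
    have hconv := F'_two_mul_add_two_sub_le n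
    ring_nf at hodd₀ hodd₁ hconv ⊢
    linarith
  · have hodd₀ := F'_two_mul_add_one n
    have hodd₁ := F'_two_mul_add_one (n + 1)
    ring_nf at hodd₀ hodd₁ ⊢
    linarith
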